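/- Let q ≥ 4 be a prime power. Let ℓ be a line of PG(2,q), let P, Q be two distinct points of ℓ, let m be a line through P different from ℓ, and let R, S, T be three pairwise distinct points of m \ {P}. Then A = (ℓ \ {P,Q}) ∪ {R, S, T} is a minimal (1,2)-saturating set of size q+2 in PG(2,q). -/

import Mathlib

open Module

/-- Points of `PG(N,q)`: 1-dimensional subspaces of `F^(N+1)`. -/
abbrev PGPoint (F : Type) [Field F] (N : ℕ) :=
  {W : Submodule F (Fin (N + 1) → F) // Module.finrank F W = 1}

/-- Lines of `PG(N,q)`: 2-dimensional subspaces of `F^(N+1)`. -/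
abbrev PGLine (F : Type) [Field F] (N : ℕ) :=
  {W : Submodule F (Fin (N + 1) → F) // Module.finrank F W = 2}

/-- The number of points of `S` lying on the line `L`. -/
noncomputable def lineCount {F : Type} [Field F] {N : ℕ}
    (S : Set (PGPoint F N)) (L : PGLine F N) : ℕ :=
  {P : PGPoint F N | P ∈ S ∧ P.1 ≤ L.1}.ncard

/-- The number of unordered pairs of distinct points of `S` collinear with `Q`
(the number of secants of `S` through `Q`, counted with multiplicity). -/
noncomputable def pairCount {F : Type} [Field F] {N : ℕ}
    (S : Set (PGPoint F N)) (Q : PGPoint F N) : ℕ :=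
  {e : Set (PGPoint F N) |
    ∃ A ∈ S, ∃ B ∈ S, A ≠ B ∧ e = {A, B} ∧ Q.1 ≤ A.1 ⊔ B.1}.ncard

/-- `S` spans (generates) `PG(N,q)`. -/
def Spans {F : Type} [Field F] {N : ℕ} (S : Set (PGPoint F N)) : Prop :=
  (⨆ P ∈ S, P.1) = ⊤

/-- `S` is a `(1,μ)`-saturating set. -/
def IsSaturating {F : Type} [Field F] {N : ℕ} (S : Set (PGPoint F N)) (μ : ℕ) : Prop :=
  Spans S ∧ S ≠ Set.univ ∧ ∀ Q : PGPoint F N, Q ∉ S → μ ≤ pairCount S Q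

/-- `S` is an optimal `(1,μ)`-saturating set (`(1,μ)`-OS set). -/
def IsOS {F : Type} [Field F] {N : ℕ} (S : Set (PGPoint F N)) (μ : ℕ) : Prop :=
  Spans S ∧ S ≠ Set.univ ∧ ∀ Q : PGPoint F N, Q ∉ S → pairCount S Q = μ

/-- `S` is a minimal `(1,μ)`-saturating set: no proper subset is `(1,μ)`-saturating. -/
def IsMinimalSaturating {F : Type} [Field F] {N : ℕ} (S : Set (PGPoint F N)) (μ : ℕ) : Prop :=
  IsSaturating S μ ∧ ∀ T : Set (PGPoint F N), T ⊂ S → ¬ IsSaturating T μ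

/-!
Every point of `ℓ` or `m` lies on a line containing three points of `A`. A point `X` off `ℓ ∪ m`
is projected from each of `R, S, T` onto `ℓ`: the projection is never `P` (otherwise `X ∈ m`), and
it is `Q` for at most one of them, since the line `XQ` meets `m` once; this leaves two secants.
Conversely every secant through such an `X` joins a point of `{R, S, T}` to its projection. After
removing `R`, a point `X ≠ Q, S` of the line `QS` has only the secant through `T`; after removing
`E ∈ ℓ`, the point `X = QR ∩ SE` has only the secant through `T` as well.
-/

namespace PGPoint

variable {F : Type} [Field F] {N : ℕ}

lemma inf_eq_bot {A B : PGPoint F N} (h : A ≠ B) : A.1 ⊓ B.1 = ⊥ := by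
  by_contra hne
  have h1 : 1 ≤ finrank F ↥(A.1 ⊓ B.1) :=
    finrank_pos_iff.2 (Submodule.nontrivial_iff_ne_bot.2 hne)
  have hA : A.1 ⊓ B.1 = A.1 :=
    Submodule.eq_of_le_of_finrank_le inf_le_left (by rw [A.2]; exact h1)
  have hB : A.1 ⊓ B.1 = B.1 :=
    Submodule.eq_of_le_of_finrank_le inf_le_right (by rw [B.2]; exact h1)
  exact h (Subtype.ext (hA ▸ hB))

lemma finrank_sup {A B : PGPoint F N} (h : A ≠ B) : finrank F ↥(A.1 ⊔ B.1) = 2 := by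
  have := Submodule.finrank_sup_add_finrank_inf_eq A.1 B.1
  rw [inf_eq_bot h, finrank_bot, A.2, B.2] at this
  omega

noncomputable def join (A B : PGPoint F N) (h : A ≠ B) : PGLine F N :=
  ⟨A.1 ⊔ B.1, finrank_sup h⟩

end PGPoint

namespace PGLine

variable {F : Type} [Field F] {N : ℕ}

lemma eq_sup {L : PGLine F N} {A B : PGPoint F N} (h : A ≠ B) (hA : A.1 ≤ L.1)
    (hB : B.1 ≤ L.1) : L.1 = A.1 ⊔ B.1 :=
  (Submodule.eq_of_le_of_finrank_le (sup_le hA hB) (by rw [PGPoint.finrank_sup h, L.2])).symm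

lemma finrank_inf {L M : PGLine F 2} (h : L ≠ M) : finrank F ↥(L.1 ⊓ M.1) = 1 := by
  have hlt : L.1 < L.1 ⊔ M.1 := by
    refine lt_of_le_of_ne le_sup_left fun hL => h (Subtype.ext ?_)
    exact (Submodule.eq_of_le_of_finrank_le (hL ▸ le_sup_right) (by rw [L.2, M.2])).symm
  have h3 : finrank F ↥(L.1 ⊔ M.1) ≤ 3 := by
    simpa using Submodule.finrank_le (L.1 ⊔ M.1)
  have := Submodule.finrank_lt_finrank_of_lt hlt
  have := Submodule.finrank_sup_add_finrank_inf_eq L.1 M.1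
  rw [L.2, M.2] at *
  omega

noncomputable def meet (L M : PGLine F 2) (h : L ≠ M) : PGPoint F 2 :=
  ⟨L.1 ⊓ M.1, finrank_inf h⟩

lemma eq_meet {L M : PGLine F 2} (h : L ≠ M) {X : PGPoint F 2} (hL : X.1 ≤ L.1)
    (hM : X.1 ≤ M.1) : X = meet L M h :=
  Subtype.ext (Submodule.eq_of_le_of_finrank_le (le_inf hL hM)
    (by rw [X.2]; exact (finrank_inf h).le))

lemma eq_of_le_of_le {L M : PGLine F 2} (h : L ≠ M) {X Y : PGPoint F 2}
    (hXL : X.1 ≤ L.1) (hXM : X.1 ≤ M.1) (hYL : Y.1 ≤ L.1) (hYM : Y.1 ≤ M.1) : X = Y := by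
  rw [eq_meet h hXL hXM, eq_meet h hYL hYM]

lemma sup_eq_top {L : PGLine F 2} {X : PGPoint F 2} (hX : ¬ X.1 ≤ L.1) : L.1 ⊔ X.1 = ⊤ := by
  have hlt : L.1 < L.1 ⊔ X.1 := lt_of_le_of_ne le_sup_left fun h => hX (h ▸ le_sup_right)
  have h3 : finrank F ↥(L.1 ⊔ X.1) ≤ 3 := by
    simpa using Submodule.finrank_le (L.1 ⊔ X.1)
  have := Submodule.finrank_lt_finrank_of_lt hlt
  rw [L.2] at this
  exact Submodule.eq_top_of_finrank_eq (by rw [finrank_fin_fun]; omega)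

lemma not_le_of_le_of_ne {l m : PGLine F 2} (hml : m ≠ l) {P U : PGPoint F 2}
    (hPl : P.1 ≤ l.1) (hPm : P.1 ≤ m.1) (hUm : U.1 ≤ m.1) (hUP : U ≠ P) : ¬ U.1 ≤ l.1 :=
  fun hUl => hUP (eq_of_le_of_le hml hUm hUl hPm hPl)

end PGLine

namespace PGPoint

variable {F : Type} [Field F]

lemma sup_eq_sup_of_le_sup {N : ℕ} {C Z U : PGPoint F N} (hZ : Z ≠ C) (hU : U ≠ C)
    (hZU : Z.1 ≤ C.1 ⊔ U.1) : C.1 ⊔ Z.1 = C.1 ⊔ U.1 :=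
  (PGLine.eq_sup (L := join C U hU.symm) hZ.symm le_sup_left hZU).symm

/-- Central projection from `C` onto a line `m` not through `C` is injective. -/
lemma eq_of_le_sup_of_le_sup {m : PGLine F 2} {C Z U₁ U₂ : PGPoint F 2} (hC : ¬ C.1 ≤ m.1)
    (hZ : Z ≠ C) (hU₁ : U₁.1 ≤ m.1) (hU₂ : U₂.1 ≤ m.1) (hZU₁ : Z.1 ≤ C.1 ⊔ U₁.1)
    (hZU₂ : Z.1 ≤ C.1 ⊔ U₂.1) : U₁ = U₂ := by
  have hC₁ : U₁ ≠ C := fun h => hC (h ▸ hU₁)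
  have hC₂ : U₂ ≠ C := fun h => hC (h ▸ hU₂)
  have hm : join C U₁ hC₁.symm ≠ m := fun h => hC (h ▸ le_sup_left)
  refine PGLine.eq_of_le_of_le hm le_sup_right hU₁ ?_ hU₂
  change U₂.1 ≤ C.1 ⊔ U₁.1
  rw [← sup_eq_sup_of_le_sup hZ hC₁ hZU₁, sup_eq_sup_of_le_sup hZ hC₂ hZU₂]
  exact le_sup_right

lemma exists_le_line_le_sup {l : PGLine F 2} {U X : PGPoint F 2} (hU : ¬ U.1 ≤ l.1)
    (hXU : X ≠ U) : ∃ Y : PGPoint F 2, Y.1 ≤ l.1 ∧ X.1 ≤ U.1 ⊔ Y.1 := by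
  have hl : join X U hXU ≠ l := fun h => hU (h ▸ le_sup_right)
  set Y := PGLine.meet (join X U hXU) l hl
  have hYU : Y ≠ U := fun h => hU (h ▸ inf_le_right)
  refine ⟨Y, inf_le_right, ?_⟩
  rw [← PGLine.eq_sup (L := join X U hXU) hYU.symm le_sup_right inf_le_left]
  exact le_sup_left

end PGPoint

section Counting

variable {K V : Type*} [Field K] [AddCommGroup V] [Module K V]

lemma finrank_comap_subtype_of_le {L W : Submodule K V} (h : W ≤ L) :
    finrank K (W.comap L.subtype) = finrank K W := by
  rw [← Submodule.finrank_map_subtype_eq, Submodule.map_comap_subtype, inf_eq_right.2 h]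

noncomputable def pointsLeEquivProjectivization (L : Submodule K V) :
    {X : {W : Submodule K V // finrank K W = 1} // X.1 ≤ L} ≃ Projectivization K L where
  toFun X := .mk'' (X.1.1.comap L.subtype) (by rw [finrank_comap_subtype_of_le X.2, X.1.2])
  invFun p := ⟨⟨p.submodule.map L.subtype, by simp [p.finrank_submodule]⟩,
    Submodule.map_subtype_le _ _⟩
  left_inv X := by
    simp only [Projectivization.submodule_mk'', Submodule.map_comap_subtype, inf_eq_right.2 X.2]
  right_inv p := by
    simp only [Submodule.comap_map_eq_of_injective L.injective_subtype,
      Projectivization.mk''_submodule]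

lemma PGLine.ncard_setOf_le {F : Type} [Field F] [Fintype F] {N : ℕ} (L : PGLine F N) :
    {X : PGPoint F N | X.1 ≤ L.1}.ncard = Fintype.card F + 1 := by
  rw [← Nat.card_coe_set_eq, Set.coe_ofPred, Nat.card_congr (pointsLeEquivProjectivization L.1),
    Projectivization.card_of_finrank_two F L.1 L.2, Nat.card_eq_fintype_card]

lemma PGLine.exists_le_ne_ne {F : Type} [Field F] [Fintype F] {N : ℕ} (L : PGLine F N)
    (A B : PGPoint F N) : ∃ X : PGPoint F N, X.1 ≤ L.1 ∧ X ≠ A ∧ X ≠ B := by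
  have hcard : ({A, B} : Set (PGPoint F N)).ncard < {X : PGPoint F N | X.1 ≤ L.1}.ncard := by
    rw [L.ncard_setOf_le]
    have := Fintype.one_lt_card (α := F)
    have := Set.ncard_insert_le A {B}
    rw [Set.ncard_singleton] at this
    omega
  obtain ⟨X, hXL, hX⟩ := Set.exists_mem_notMem_of_ncard_lt_ncard hcard
  simp only [Set.mem_insert_iff, Set.mem_singleton_iff, not_or] at hX
  exact ⟨X, hXL, hX⟩

end Counting

section PairCount

variable {F : Type} [Field F] {N : ℕ}

lemma pairCount_mono [Fintype F] {S T : Set (PGPoint F N)} (h : T ⊆ S) (X : PGPoint F N) :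
    pairCount T X ≤ pairCount S X := by
  refine Set.ncard_le_ncard ?_ (Set.toFinite _)
  rintro e ⟨A, hA, B, hB, hAB, he, hX⟩
  exact ⟨A, h hA, B, h hB, hAB, he, hX⟩

lemma two_le_pairCount [Fintype F] {S : Set (PGPoint F N)} {X A B C D : PGPoint F N}
    (hA : A ∈ S) (hB : B ∈ S) (hC : C ∈ S) (hD : D ∈ S) (hAB : A ≠ B) (hCD : C ≠ D)
    (hXAB : X.1 ≤ A.1 ⊔ B.1) (hXCD : X.1 ≤ C.1 ⊔ D.1) (hne : ({A, B} : Set _) ≠ {C, D}) :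
    2 ≤ pairCount S X :=
  (Set.one_lt_ncard_iff (Set.toFinite _)).2
    ⟨_, _, ⟨A, hA, B, hB, hAB, rfl, hXAB⟩, ⟨C, hC, D, hD, hCD, rfl, hXCD⟩, hne⟩

lemma two_le_pairCount_of_le_line [Fintype F] {S : Set (PGPoint F N)} {L : PGLine F N}
    {X A B C : PGPoint F N} (hA : A ∈ S) (hB : B ∈ S) (hC : C ∈ S) (hAB : A ≠ B) (hAC : A ≠ C)
    (hBC : B ≠ C) (hAL : A.1 ≤ L.1) (hBL : B.1 ≤ L.1) (hCL : C.1 ≤ L.1) (hX : X.1 ≤ L.1) :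
    2 ≤ pairCount S X := by
  refine two_le_pairCount hA hB hA hC hAB hAC (PGLine.eq_sup hAB hAL hBL ▸ hX)
    (PGLine.eq_sup hAC hAL hCL ▸ hX) fun h => ?_
  have hC' : C ∈ ({A, B} : Set (PGPoint F N)) := h ▸ Set.mem_insert_of_mem _ rfl
  rcases hC' with h' | h'
  exacts [hAC h'.symm, hBC (Set.mem_singleton_iff.1 h').symm]

/-- A secant of `S` through `X` joins some `U ∈ S \ l` to the projection of `U` from `X` onto `l`;
by `hT` that projection lies outside `S` unless `U = T`. -/
lemma pairCount_le_one [Fintype F] {S : Set (PGPoint F 2)} {l m : PGLine F 2}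
    {X T : PGPoint F 2} (hS : ∀ Z ∈ S, Z.1 ≤ l.1 ∨ Z.1 ≤ m.1) (hXl : ¬ X.1 ≤ l.1)
    (hXm : ¬ X.1 ≤ m.1)
    (hT : ∀ U ∈ S, ¬ U.1 ≤ l.1 → U ≠ T → ∃ B ∉ S, B.1 ≤ l.1 ∧ X.1 ≤ U.1 ⊔ B.1) :
    pairCount S X ≤ 1 := by
  have blocked : ∀ U ∈ S, ∀ Y ∈ S, ¬ U.1 ≤ l.1 → Y.1 ≤ l.1 → X.1 ≤ U.1 ⊔ Y.1 → U = T := by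
    intro U hU Y hY hUl hYl hXY
    by_contra hUT
    obtain ⟨B, hBS, hBl, hXB⟩ := hT U hU hUl hUT
    have hXU : X ≠ U := fun h => hXm (h ▸ (hS U hU).resolve_left hUl)
    exact hBS (PGPoint.eq_of_le_sup_of_le_sup hUl hXU hYl hBl hXY hXB ▸ hY)
  have normal : ∀ e ∈ {e : Set (PGPoint F 2) |
      ∃ A ∈ S, ∃ B ∈ S, A ≠ B ∧ e = {A, B} ∧ X.1 ≤ A.1 ⊔ B.1},
      ∃ Y : PGPoint F 2, Y.1 ≤ l.1 ∧ X.1 ≤ T.1 ⊔ Y.1 ∧ e = {T, Y} ∧ ¬ T.1 ≤ l.1 ∧ T.1 ≤ m.1 := by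
    rintro e ⟨A, hA, B, hB, hAB, rfl, hX⟩
    by_cases hAl : A.1 ≤ l.1 <;> by_cases hBl : B.1 ≤ l.1
    · exact absurd (PGLine.eq_sup hAB hAl hBl ▸ hX) hXl
    · rw [sup_comm] at hX
      obtain rfl := blocked B hB A hA hBl hAl hX
      exact ⟨A, hAl, hX, Set.pair_comm A B, hBl, (hS B hB).resolve_left hBl⟩
    · obtain rfl := blocked A hA B hB hAl hBl hX
      exact ⟨B, hBl, hX, rfl, hAl, (hS A hA).resolve_left hAl⟩
    · have hAm := (hS A hA).resolve_left hAl
      have hBm := (hS B hB).resolve_left hBl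
      exact absurd (PGLine.eq_sup hAB hAm hBm ▸ hX) hXm
  refine (Set.ncard_le_one_iff (Set.toFinite _)).2 fun he₁ he₂ => ?_
  obtain ⟨Y₁, hY₁, hXY₁, rfl, hTl, hTm⟩ := normal _ he₁
  obtain ⟨Y₂, hY₂, hXY₂, rfl, -⟩ := normal _ he₂
  have hXT : X ≠ T := fun h => hXm (h ▸ hTm)
  rw [PGPoint.eq_of_le_sup_of_le_sup hTl hXT hY₁ hY₂ hXY₁ hXY₂]

lemma isMinimalSaturating_of_forall_exists [Fintype F] {S : Set (PGPoint F N)} {μ : ℕ}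
    (hS : IsSaturating S μ) (h : ∀ a ∈ S, ∃ X ∉ S, pairCount (S \ {a}) X < μ) :
    IsMinimalSaturating S μ := by
  refine ⟨hS, fun T hTS hT => ?_⟩
  obtain ⟨a, haS, haT⟩ := Set.exists_of_ssubset hTS
  obtain ⟨X, hXS, hX⟩ := h a haS
  have hTa : T ⊆ S \ {a} := fun x hx => ⟨hTS.subset hx, fun hxa => haT (hxa ▸ hx)⟩
  have := hT.2.2 X fun hXT => hXS (hTS.subset hXT)
  have := pairCount_mono hTa X
  omega

end PairCount

section Witness

variable {F : Type} [Field F] [Fintype F] {S : Set (PGPoint F 2)} {l m : PGLine F 2}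

lemma exists_pairCount_le_one_of_subset_insert_pair {Q U₁ U₂ : PGPoint F 2}
    (hS : ∀ Z ∈ S, Z.1 ≤ l.1 ∨ Z = U₁ ∨ Z = U₂) (hQS : Q ∉ S) (hQl : Q.1 ≤ l.1)
    (hQm : ¬ Q.1 ≤ m.1) (hU₁m : U₁.1 ≤ m.1) (hU₂m : U₂.1 ≤ m.1) (hU₁l : ¬ U₁.1 ≤ l.1) :
    ∃ X : PGPoint F 2, ¬ X.1 ≤ l.1 ∧ ¬ X.1 ≤ m.1 ∧ pairCount S X ≤ 1 := by
  have hQU₁ : Q ≠ U₁ := fun h => hU₁l (h ▸ hQl)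
  set n := PGPoint.join Q U₁ hQU₁
  obtain ⟨X, hXn, hXQ, hXU₁⟩ := n.exists_le_ne_ne Q U₁
  have hnl : n ≠ l := fun h => hU₁l (h ▸ le_sup_right)
  have hnm : n ≠ m := fun h => hQm (h ▸ le_sup_left)
  have hXl : ¬ X.1 ≤ l.1 := fun h => hXQ (PGLine.eq_of_le_of_le hnl hXn h le_sup_left hQl)
  have hXm : ¬ X.1 ≤ m.1 := fun h => hXU₁ (PGLine.eq_of_le_of_le hnm hXn h le_sup_right hU₁m)
  refine ⟨X, hXl, hXm, pairCount_le_one (T := U₂) ?_ hXl hXm ?_⟩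
  · intro Z hZ
    rcases hS Z hZ with hZl | rfl | rfl
    exacts [.inl hZl, .inr hU₁m, .inr hU₂m]
  · intro U hU hUl hUU₂
    obtain rfl : U = U₁ := ((hS U hU).resolve_left hUl).resolve_right hUU₂
    exact ⟨Q, hQS, hQl, sup_comm Q.1 U.1 ▸ hXn⟩

lemma exists_pairCount_le_one_of_subset_insert_triple {Q E U₁ U₂ U₃ : PGPoint F 2}
    (hS : ∀ Z ∈ S, Z.1 ≤ l.1 ∨ Z = U₁ ∨ Z = U₂ ∨ Z = U₃) (hQS : Q ∉ S) (hES : E ∉ S)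
    (hQl : Q.1 ≤ l.1) (hEl : E.1 ≤ l.1) (hQm : ¬ Q.1 ≤ m.1) (hEm : ¬ E.1 ≤ m.1) (hQE : Q ≠ E)
    (hU₁m : U₁.1 ≤ m.1) (hU₂m : U₂.1 ≤ m.1) (hU₃m : U₃.1 ≤ m.1) (hU₁l : ¬ U₁.1 ≤ l.1)
    (hU₂l : ¬ U₂.1 ≤ l.1) (hU₁₂ : U₁ ≠ U₂) :
    ∃ X : PGPoint F 2, ¬ X.1 ≤ l.1 ∧ ¬ X.1 ≤ m.1 ∧ pairCount S X ≤ 1 := by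
  have hQU₁ : Q ≠ U₁ := fun h => hU₁l (h ▸ hQl)
  have hEU₂ : E ≠ U₂ := fun h => hU₂l (h ▸ hEl)
  set n₁ := PGPoint.join Q U₁ hQU₁
  set n₂ := PGPoint.join E U₂ hEU₂
  have hn₁l : n₁ ≠ l := fun h => hU₁l (h ▸ le_sup_right)
  have hn₂l : n₂ ≠ l := fun h => hU₂l (h ▸ le_sup_right)
  have hn₁m : n₁ ≠ m := fun h => hQm (h ▸ le_sup_left)
  have hn₂m : n₂ ≠ m := fun h => hEm (h ▸ le_sup_left)
  have hQn₂ : ¬ Q.1 ≤ n₂.1 := fun h => hQE (PGLine.eq_of_le_of_le hn₂l h hQl le_sup_left hEl)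
  have hn₁₂ : n₁ ≠ n₂ := fun h => hQn₂ (h ▸ le_sup_left)
  set X := PGLine.meet n₁ n₂ hn₁₂
  have hXn₁ : X.1 ≤ n₁.1 := inf_le_left
  have hXn₂ : X.1 ≤ n₂.1 := inf_le_right
  have hXl : ¬ X.1 ≤ l.1 := fun h =>
    hQn₂ (PGLine.eq_of_le_of_le hn₁l hXn₁ h le_sup_left hQl ▸ hXn₂)
  have hXm : ¬ X.1 ≤ m.1 := fun h => hU₁₂ (PGLine.eq_of_le_of_le hn₂m
    (PGLine.eq_of_le_of_le hn₁m hXn₁ h le_sup_right hU₁m ▸ hXn₂) hU₁m le_sup_right hU₂m)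
  refine ⟨X, hXl, hXm, pairCount_le_one (T := U₃) ?_ hXl hXm ?_⟩
  · intro Z hZ
    rcases hS Z hZ with hZl | rfl | rfl | rfl
    exacts [.inl hZl, .inr hU₁m, .inr hU₂m, .inr hU₃m]
  · intro U hU hUl hUU₃
    rcases (hS U hU).resolve_left hUl with rfl | rfl | rfl
    · exact ⟨Q, hQS, hQl, sup_comm Q.1 U.1 ▸ hXn₁⟩
    · exact ⟨E, hES, hEl, sup_comm E.1 U.1 ▸ hXn₂⟩
    · exact absurd rfl hUU₃

end Witness

lemma spans_of_le_of_not_le {F : Type} [Field F] {S : Set (PGPoint F 2)} {L : PGLine F 2}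
    {A B C : PGPoint F 2} (hA : A ∈ S) (hB : B ∈ S) (hC : C ∈ S) (hAB : A ≠ B)
    (hAL : A.1 ≤ L.1) (hBL : B.1 ≤ L.1) (hCL : ¬ C.1 ≤ L.1) : Spans S := by
  rw [Spans, eq_top_iff, ← PGLine.sup_eq_top hCL, PGLine.eq_sup hAB hAL hBL]
  exact sup_le (sup_le (le_biSup _ hA) (le_biSup _ hB)) (le_biSup _ hC)

section Configuration

variable {F : Type} [Field F]

def twoLineSet (l : PGLine F 2) (P Q R S T : PGPoint F 2) : Set (PGPoint F 2) :=
  ({X : PGPoint F 2 | X.1 ≤ l.1} \ {P, Q}) ∪ {R, S, T}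

lemma mem_twoLineSet {l : PGLine F 2} {P Q R S T X : PGPoint F 2} :
    X ∈ twoLineSet l P Q R S T ↔ (X.1 ≤ l.1 ∧ X ≠ P ∧ X ≠ Q) ∨ X = R ∨ X = S ∨ X = T := by
  simp only [twoLineSet, Set.mem_union, Set.mem_sdiff, Set.mem_ofPred_eq, Set.mem_insert_iff,
    Set.mem_singleton_iff, not_or]

structure IsTwoLineConfig (l m : PGLine F 2) (P Q R S T : PGPoint F 2) : Prop where
  P_ne_Q : P ≠ Q
  P_le_l : P.1 ≤ l.1
  Q_le_l : Q.1 ≤ l.1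
  m_ne_l : m ≠ l
  P_le_m : P.1 ≤ m.1
  R_le_m : R.1 ≤ m.1
  S_le_m : S.1 ≤ m.1
  T_le_m : T.1 ≤ m.1
  R_ne_P : R ≠ P
  S_ne_P : S ≠ P
  T_ne_P : T ≠ P
  R_ne_S : R ≠ S
  R_ne_T : R ≠ T
  S_ne_T : S ≠ T

namespace IsTwoLineConfig

variable {l m : PGLine F 2} {P Q R S T : PGPoint F 2}

lemma not_le_l (h : IsTwoLineConfig l m P Q R S T) {U : PGPoint F 2} (hUm : U.1 ≤ m.1)
    (hUP : U ≠ P) : ¬ U.1 ≤ l.1 :=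
  PGLine.not_le_of_le_of_ne h.m_ne_l h.P_le_l h.P_le_m hUm hUP

lemma Q_not_le_m (h : IsTwoLineConfig l m P Q R S T) : ¬ Q.1 ≤ m.1 :=
  PGLine.not_le_of_le_of_ne h.m_ne_l.symm h.P_le_m h.P_le_l h.Q_le_l h.P_ne_Q.symm

lemma le_m_of_mem_triple (h : IsTwoLineConfig l m P Q R S T) {U : PGPoint F 2}
    (hU : U = R ∨ U = S ∨ U = T) : U.1 ≤ m.1 ∧ U ≠ P := by
  rcases hU with rfl | rfl | rfl
  exacts [⟨h.R_le_m, h.R_ne_P⟩, ⟨h.S_le_m, h.S_ne_P⟩, ⟨h.T_le_m, h.T_ne_P⟩]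

lemma not_le_l_of_mem_triple (h : IsTwoLineConfig l m P Q R S T) {U : PGPoint F 2}
    (hU : U = R ∨ U = S ∨ U = T) : ¬ U.1 ≤ l.1 :=
  h.not_le_l (h.le_m_of_mem_triple hU).1 (h.le_m_of_mem_triple hU).2

lemma le_or_le_of_mem (h : IsTwoLineConfig l m P Q R S T) {X : PGPoint F 2}
    (hX : X ∈ twoLineSet l P Q R S T) : X.1 ≤ l.1 ∨ X.1 ≤ m.1 := by
  rcases mem_twoLineSet.1 hX with ⟨hXl, -⟩ | hXm
  exacts [.inl hXl, .inr (h.le_m_of_mem_triple hXm).1]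

lemma P_notMem (h : IsTwoLineConfig l m P Q R S T) : P ∉ twoLineSet l P Q R S T := by
  rw [mem_twoLineSet]
  rintro (⟨-, hP, -⟩ | hP | hP | hP)
  exacts [hP rfl, h.R_ne_P hP.symm, h.S_ne_P hP.symm, h.T_ne_P hP.symm]

lemma Q_notMem (h : IsTwoLineConfig l m P Q R S T) : Q ∉ twoLineSet l P Q R S T := by
  intro hQ
  rcases mem_twoLineSet.1 hQ with ⟨-, -, hQQ⟩ | hQ
  · exact hQQ rfl
  · obtain ⟨hQm, -⟩ := h.le_m_of_mem_triple hQ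
    exact h.Q_not_le_m hQm

lemma notMem_of_not_le (h : IsTwoLineConfig l m P Q R S T) {X : PGPoint F 2}
    (hXl : ¬ X.1 ≤ l.1) (hXm : ¬ X.1 ≤ m.1) : X ∉ twoLineSet l P Q R S T :=
  fun hX => (h.le_or_le_of_mem hX).elim hXl hXm

lemma ncard_setOf_le_diff [Fintype F] (h : IsTwoLineConfig l m P Q R S T) :
    ({X : PGPoint F 2 | X.1 ≤ l.1} \ {P, Q}).ncard = Fintype.card F - 1 := by
  have hPQ : ({P, Q} : Set (PGPoint F 2)) ⊆ {X | X.1 ≤ l.1} :=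
    Set.insert_subset h.P_le_l (Set.singleton_subset_iff.2 h.Q_le_l)
  rw [Set.ncard_sdiff hPQ, l.ncard_setOf_le, Set.ncard_pair h.P_ne_Q]
  omega

lemma ncard_twoLineSet [Fintype F] (h : IsTwoLineConfig l m P Q R S T) :
    (twoLineSet l P Q R S T).ncard = Fintype.card F + 2 := by
  have hdisj : Disjoint ({X : PGPoint F 2 | X.1 ≤ l.1} \ {P, Q}) {R, S, T} := by
    exact Set.disjoint_right.2 fun U hU hUl => h.not_le_l_of_mem_triple hU hUl.1
  have hRST : ({R, S, T} : Set (PGPoint F 2)).ncard = 3 :=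
    Set.ncard_eq_three.2 ⟨R, S, T, h.R_ne_S, h.R_ne_T, h.S_ne_T, rfl⟩
  rw [twoLineSet, Set.ncard_union_eq hdisj, h.ncard_setOf_le_diff, hRST]
  have := Fintype.card_pos (α := F)
  omega

lemma exists_secant (h : IsTwoLineConfig l m P Q R S T) {X U : PGPoint F 2}
    (hU : U = R ∨ U = S ∨ U = T) (hXm : ¬ X.1 ≤ m.1) (hXQU : ¬ X.1 ≤ Q.1 ⊔ U.1) :
    ∃ Y ∈ twoLineSet l P Q R S T, Y.1 ≤ l.1 ∧ X.1 ≤ U.1 ⊔ Y.1 := by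
  obtain ⟨hUm, hUP⟩ := h.le_m_of_mem_triple hU
  obtain ⟨Y, hYl, hXY⟩ := PGPoint.exists_le_line_le_sup (X := X) (h.not_le_l_of_mem_triple hU)
    fun hXU => hXm (hXU ▸ hUm)
  have hYP : Y ≠ P := by
    rintro rfl
    exact hXm (PGLine.eq_sup hUP hUm h.P_le_m ▸ hXY)
  have hYQ : Y ≠ Q := by
    rintro rfl
    exact hXQU (sup_comm U.1 Y.1 ▸ hXY)
  exact ⟨Y, mem_twoLineSet.2 (.inl ⟨hYl, hYP, hYQ⟩), hYl, hXY⟩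

/-- Each of `R, S, T` whose join with `X` misses `Q` gives a secant through `X`, and the line `XQ`
meets `m` in at most one of them. -/
lemma two_le_pairCount_of_not_le [Fintype F] (h : IsTwoLineConfig l m P Q R S T)
    {X : PGPoint F 2} (hXl : ¬ X.1 ≤ l.1) (hXm : ¬ X.1 ≤ m.1) :
    2 ≤ pairCount (twoLineSet l P Q R S T) X := by
  have two : ∀ U₁ U₂ : PGPoint F 2, (U₁ = R ∨ U₁ = S ∨ U₁ = T) → (U₂ = R ∨ U₂ = S ∨ U₂ = T) →
      U₁ ≠ U₂ → ¬ X.1 ≤ Q.1 ⊔ U₁.1 → ¬ X.1 ≤ Q.1 ⊔ U₂.1 →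
      2 ≤ pairCount (twoLineSet l P Q R S T) X := by
    intro U₁ U₂ hU₁ hU₂ hU₁₂ hXU₁ hXU₂
    obtain ⟨Y₁, hY₁, hY₁l, hXY₁⟩ := h.exists_secant hU₁ hXm hXU₁
    obtain ⟨Y₂, hY₂, hY₂l, hXY₂⟩ := h.exists_secant hU₂ hXm hXU₂
    have hU₁l := h.not_le_l_of_mem_triple hU₁
    have hU₂l := h.not_le_l_of_mem_triple hU₂
    refine two_le_pairCount (mem_twoLineSet.2 (.inr hU₁)) hY₁ (mem_twoLineSet.2 (.inr hU₂)) hY₂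
      (fun h => hU₁l (h ▸ hY₁l)) (fun h => hU₂l (h ▸ hY₂l)) hXY₁ hXY₂ fun he => ?_
    have hU₁' : U₁ ∈ ({U₂, Y₂} : Set (PGPoint F 2)) := he ▸ Set.mem_insert U₁ {Y₁}
    rcases hU₁' with h' | h'
    exacts [hU₁₂ h', hU₁l ((Set.mem_singleton_iff.1 h') ▸ hY₂l)]
  have hXQ : X ≠ Q := fun hXQ => hXl (hXQ ▸ h.Q_le_l)
  have unique : ∀ {U₁ U₂ : PGPoint F 2}, U₁.1 ≤ m.1 → U₂.1 ≤ m.1 → X.1 ≤ Q.1 ⊔ U₁.1 →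
      X.1 ≤ Q.1 ⊔ U₂.1 → U₁ = U₂ :=
    PGPoint.eq_of_le_sup_of_le_sup h.Q_not_le_m hXQ
  by_cases hR : X.1 ≤ Q.1 ⊔ R.1
  · exact two S T (by simp) (by simp) h.S_ne_T
      (fun hS => h.R_ne_S (unique h.R_le_m h.S_le_m hR hS))
      (fun hT => h.R_ne_T (unique h.R_le_m h.T_le_m hR hT))
  by_cases hS : X.1 ≤ Q.1 ⊔ S.1
  · exact two R T (by simp) (by simp) h.R_ne_T hR
      (fun hT => h.S_ne_T (unique h.S_le_m h.T_le_m hS hT))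
  · exact two R S (by simp) (by simp) h.R_ne_S hR hS

lemma isSaturating [Fintype F] (h : IsTwoLineConfig l m P Q R S T) (hq : 4 ≤ Fintype.card F) :
    IsSaturating (twoLineSet l P Q R S T) 2 := by
  have hmem : {X : PGPoint F 2 | X.1 ≤ l.1} \ {P, Q} ⊆ twoLineSet l P Q R S T :=
    Set.subset_union_left
  have hcard : 2 < ({X : PGPoint F 2 | X.1 ≤ l.1} \ {P, Q}).ncard := by
    rw [h.ncard_setOf_le_diff]
    omega
  obtain ⟨E₁, E₂, E₃, hE₁, hE₂, hE₃, h₁₂, h₁₃, h₂₃⟩ :=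
    (Set.two_lt_ncard_iff (Set.toFinite _)).1 hcard
  have hR : R ∈ twoLineSet l P Q R S T := mem_twoLineSet.2 (by simp)
  have hS : S ∈ twoLineSet l P Q R S T := mem_twoLineSet.2 (by simp)
  have hT : T ∈ twoLineSet l P Q R S T := mem_twoLineSet.2 (by simp)
  refine ⟨spans_of_le_of_not_le (hmem hE₁) (hmem hE₂) hR h₁₂ hE₁.1 hE₂.1
    (h.not_le_l_of_mem_triple (.inl rfl)), fun huniv => h.P_notMem (huniv ▸ Set.mem_univ P),
    fun X _ => ?_⟩
  by_cases hXm : X.1 ≤ m.1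
  · exact two_le_pairCount_of_le_line hR hS hT h.R_ne_S h.R_ne_T h.S_ne_T
      h.R_le_m h.S_le_m h.T_le_m hXm
  by_cases hXl : X.1 ≤ l.1
  · exact two_le_pairCount_of_le_line (hmem hE₁) (hmem hE₂) (hmem hE₃) h₁₂ h₁₃ h₂₃
      hE₁.1 hE₂.1 hE₃.1 hXl
  · exact h.two_le_pairCount_of_not_le hXl hXm

lemma exists_pairCount_diff_lt [Fintype F] (h : IsTwoLineConfig l m P Q R S T) :
    ∀ a ∈ twoLineSet l P Q R S T,
      ∃ X ∉ twoLineSet l P Q R S T, pairCount (twoLineSet l P Q R S T \ {a}) X < 2 := by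
  intro a ha
  suffices ∃ X : PGPoint F 2, ¬ X.1 ≤ l.1 ∧ ¬ X.1 ≤ m.1 ∧
      pairCount (twoLineSet l P Q R S T \ {a}) X ≤ 1 by
    obtain ⟨X, hXl, hXm, hX⟩ := this
    exact ⟨X, h.notMem_of_not_le hXl hXm, Nat.lt_succ_of_le hX⟩
  have hQ : Q ∉ twoLineSet l P Q R S T \ {a} := fun hQ => h.Q_notMem hQ.1
  have hmem : ∀ Z ∈ twoLineSet l P Q R S T \ {a},
      Z.1 ≤ l.1 ∨ Z ≠ a ∧ (Z = R ∨ Z = S ∨ Z = T) := by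
    rintro Z ⟨hZ, hZa⟩
    rcases mem_twoLineSet.1 hZ with ⟨hZl, -⟩ | hZ
    exacts [.inl hZl, .inr ⟨hZa, hZ⟩]
  have hRl := h.not_le_l_of_mem_triple (.inl rfl)
  have hSl := h.not_le_l_of_mem_triple (.inr (.inl rfl))
  rcases mem_twoLineSet.1 ha with ⟨hal, haP, haQ⟩ | rfl | rfl | rfl
  · refine exists_pairCount_le_one_of_subset_insert_triple (fun Z hZ => ?_) hQ
      (fun ha => ha.2 rfl) h.Q_le_l hal h.Q_not_le_m
      (PGLine.not_le_of_le_of_ne h.m_ne_l.symm h.P_le_m h.P_le_l hal haP) haQ.symm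
      h.R_le_m h.S_le_m h.T_le_m hRl hSl h.R_ne_S
    rcases hmem Z hZ with hZl | ⟨-, hZ⟩
    exacts [.inl hZl, .inr hZ]
  · refine exists_pairCount_le_one_of_subset_insert_pair (fun Z hZ => ?_) hQ h.Q_le_l
      h.Q_not_le_m h.S_le_m h.T_le_m hSl
    rcases hmem Z hZ with hZl | ⟨hZa, hZ | hZ⟩
    exacts [.inl hZl, absurd hZ hZa, .inr hZ]
  · refine exists_pairCount_le_one_of_subset_insert_pair (fun Z hZ => ?_) hQ h.Q_le_l
      h.Q_not_le_m h.R_le_m h.T_le_m hRl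
    rcases hmem Z hZ with hZl | ⟨hZa, hZ | hZ | hZ⟩
    exacts [.inl hZl, .inr (.inl hZ), absurd hZ hZa, .inr (.inr hZ)]
  · refine exists_pairCount_le_one_of_subset_insert_pair (fun Z hZ => ?_) hQ h.Q_le_l
      h.Q_not_le_m h.R_le_m h.S_le_m hRl
    rcases hmem Z hZ with hZl | ⟨hZa, hZ | hZ | hZ⟩
    exacts [.inl hZl, .inr (.inl hZ), .inr (.inr hZ), absurd hZ hZa]

lemma isMinimalSaturating [Fintype F] (h : IsTwoLineConfig l m P Q R S T)
    (hq : 4 ≤ Fintype.card F) : IsMinimalSaturating (twoLineSet l P Q R S T) 2 :=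
  isMinimalSaturating_of_forall_exists (h.isSaturating hq) h.exists_pairCount_diff_lt

end IsTwoLineConfig

end Configuration

/-- Let `q ≥ 4`, `ℓ` a line of `PG(2,q)`, `P ≠ Q` points of
`ℓ`, `m ≠ ℓ` a line through `P`, and `R, S, T` pairwise distinct points of
`m \ {P}`. Then `A = (ℓ \ {P,Q}) ∪ {R,S,T}` is a minimal `(1,2)`-saturating set
of size `q+2`. -/
theorem stmt_16 (F : Type) [Field F] [Fintype F] (q : ℕ)
    (hq : Fintype.card F = q) (hq4 : 4 ≤ q)
    (l m : PGLine F 2) (P Q R S T : PGPoint F 2)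
    (hPQ : P ≠ Q) (hPl : P.1 ≤ l.1) (hQl : Q.1 ≤ l.1)
    (hml : m ≠ l) (hPm : P.1 ≤ m.1)
    (hRm : R.1 ≤ m.1) (hSm : S.1 ≤ m.1) (hTm : T.1 ≤ m.1)
    (hRP : R ≠ P) (hSP : S ≠ P) (hTP : T ≠ P)
    (hRS : R ≠ S) (hRT : R ≠ T) (hST : S ≠ T) :
    (({X : PGPoint F 2 | X.1 ≤ l.1} \ {P, Q}) ∪ {R, S, T}).ncard = q + 2 ∧
    IsMinimalSaturating (({X : PGPoint F 2 | X.1 ≤ l.1} \ {P, Q}) ∪ {R, S, T}) 2 := by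
  subst hq
  have h : IsTwoLineConfig l m P Q R S T :=
    ⟨hPQ, hPl, hQl, hml, hPm, hRm, hSm, hTm, hRP, hSP, hTP, hRS, hRT, hST⟩
  exact ⟨h.ncard_twoLineSet, h.isMinimalSaturating hq4⟩
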